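/- Let T₁, T₂ ⊆ ℝ be measurable sets whose characteristic functions χ_{T₁}, χ_{T₂} are equi-Weyl almost periodic of degree 1 (i.e. T₁, T₂ ∈ W(ℝ)). Then the characteristic functions of T₁ ∪ T₂, T₁ ∩ T₂, and T₁ \ T₂ are also equi-Weyl almost periodic of degree 1. -/

import Mathlib

open MeasureTheory

/-- A set `T ⊆ ℝ` is relatively dense. -/
def RelDense (T : Set ℝ) : Prop :=
  ∃ a > (0 : ℝ), ∀ ξ : ℝ, ∃ τ ∈ T, ξ ≤ τ ∧ τ ≤ ξ + a

/-- `f` is equi-Weyl almost periodic of degree 1 (real valued). -/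
def W1APr (f : ℝ → ℝ) : Prop :=
  ∀ ε > (0 : ℝ), ∃ l > (0 : ℝ), RelDense {τ : ℝ |
    (⨆ ξ : ℝ, (1 / l) * ∫ t in ξ..(ξ + l), |f t - f (t + τ)|) < ε}

/-!
Whether `x` and `y` both lie in `T₁ ∪ T₂` (or `T₁ ∩ T₂`, or `T₁ \ T₂`) or both lie outside can
change only if it changes for `T₁` or for `T₂`, so
`|χ_S x - χ_S y| ≤ |χ_{T₁} x - χ_{T₁} y| + |χ_{T₂} x - χ_{T₂} y|` and every common
`ε / 2`-almost period of `χ_{T₁}` and `χ_{T₂}` is an `ε`-almost period of `χ_S`.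

What needs proof is that two equi-Weyl almost periodic functions have relatively dense common
almost periods. For a fixed window `l`, the Weyl distance between translates of `f` is
translation invariant, and the translates of a bounded measurable `W¹` function are totally
bounded for it: every translate is close to one by some `u ∈ [0, a]`, `a` the gap of the almost
periods, and these are finitely many up to `ε` by continuity of translation in `L¹`. Partition `ℝ`
into finitely many cells on which the translates of both functions are close; fixing one point
`r` in each cell, every `x` has `x - r` a common almost period for one of finitely many `r`.
-/
open Set Filter Topology

structure IsBddMeasurable (f : ℝ → ℝ) : Prop where
  measurable : Measurable f
  bdd : ∃ C, ∀ t, |f t| ≤ C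

theorem isBddMeasurable_indicator_one {T : Set ℝ} (hT : MeasurableSet T) :
    IsBddMeasurable (T.indicator fun _ => (1 : ℝ)) :=
  ⟨measurable_const.indicator hT, 1, fun t => by by_cases h : t ∈ T <;> simp [h]⟩

noncomputable def windowMean (f : ℝ → ℝ) (l ξ σ τ : ℝ) : ℝ :=
  (1 / l) * ∫ t in ξ..(ξ + l), |f (t + σ) - f (t + τ)|

noncomputable def weylDist (f : ℝ → ℝ) (l σ τ : ℝ) : ℝ :=
  ⨆ ξ, windowMean f l ξ σ τ

theorem w1APr_iff {f : ℝ → ℝ} :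
    W1APr f ↔ ∀ ε > 0, ∃ l > 0, RelDense {τ | weylDist f l 0 τ < ε} := by
  simp only [W1APr, weylDist, windowMean, add_zero]

theorem RelDense.mono {E F : Set ℝ} (hE : RelDense E) (hEF : E ⊆ F) : RelDense F := by
  obtain ⟨a, ha, hE⟩ := hE
  refine ⟨a, ha, fun ξ => ?_⟩
  obtain ⟨τ, hτ, h⟩ := hE ξ
  exact ⟨τ, hEF hτ, h⟩

theorem relDense_of_forall_exists_sub_mem {E : Set ℝ} (N : Finset ℝ)
    (h : ∀ x, ∃ r ∈ N, x - r ∈ E) : RelDense E := by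
  set M := ∑ r ∈ N, |r|
  have hM : ∀ r ∈ N, |r| ≤ M := fun r hr =>
    Finset.single_le_sum (f := fun r => |r|) (fun r _ => abs_nonneg r) hr
  have hM0 : 0 ≤ M := Finset.sum_nonneg fun r _ => abs_nonneg r
  refine ⟨2 * M + 1, by linarith, fun ξ => ?_⟩
  obtain ⟨r, hr, hE⟩ := h (ξ + M)
  obtain ⟨hr₁, hr₂⟩ := abs_le.1 (hM r hr)
  exact ⟨_, hE, by linarith, by linarith⟩

theorem exists_finset_forall_exists_eq_of_finite_range {X Y : Type*} [Nonempty X] {c : X → Y}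
    (hc : (range c).Finite) : ∃ R : Finset X, ∀ x, ∃ r ∈ R, c r = c x := by
  classical
  exact ⟨hc.toFinset.image (Function.invFun c), fun x =>
    ⟨_, Finset.mem_image_of_mem _ (hc.mem_toFinset.2 (mem_range_self x)),
      Function.invFun_eq ⟨x, rfl⟩⟩⟩

theorem one_div_mul_integral_le_add {A B C : ℝ → ℝ} {l ξ : ℝ} (hl : 0 ≤ l)
    (hA : IntervalIntegrable A volume ξ (ξ + l)) (hB : IntervalIntegrable B volume ξ (ξ + l))
    (hC : IntervalIntegrable C volume ξ (ξ + l)) (h : ∀ t, A t ≤ B t + C t) :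
    (1 / l) * ∫ t in ξ..(ξ + l), A t
      ≤ (1 / l) * (∫ t in ξ..(ξ + l), B t) + (1 / l) * ∫ t in ξ..(ξ + l), C t := by
  rw [← mul_add, ← intervalIntegral.integral_add hB hC]
  gcongr
  exact intervalIntegral.integral_mono_on (by linarith) hA (hB.add hC) fun t _ => h t

namespace IsBddMeasurable

variable {f : ℝ → ℝ}

theorem intervalIntegrable (hf : IsBddMeasurable f) (σ τ a b : ℝ) :
    IntervalIntegrable (fun t => |f (t + σ) - f (t + τ)|) volume a b := by
  obtain ⟨C, hC⟩ := hf.bdd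
  refine (intervalIntegrable_const (c := 2 * C)).mono_fun' ?_ (Eventually.of_forall fun t => ?_)
  · exact ((hf.measurable.comp (measurable_add_const σ)).sub
      (hf.measurable.comp (measurable_add_const τ))).abs.aestronglyMeasurable
  · simp only [Real.norm_eq_abs, abs_abs]
    linarith [abs_sub (f (t + σ)) (f (t + τ)), hC (t + σ), hC (t + τ)]

theorem bddAbove_windowMean (hf : IsBddMeasurable f) {l : ℝ} (hl : 0 < l) (σ τ : ℝ) :
    BddAbove (range fun ξ => windowMean f l ξ σ τ) := by
  obtain ⟨C, hC⟩ := hf.bdd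
  refine ⟨2 * C, ?_⟩
  rintro _ ⟨ξ, rfl⟩
  have hint : ∫ t in ξ..(ξ + l), |f (t + σ) - f (t + τ)| ≤ ∫ _ in ξ..(ξ + l), 2 * C :=
    intervalIntegral.integral_mono_on (by linarith) (hf.intervalIntegrable σ τ _ _)
      intervalIntegrable_const fun t _ => by
        linarith [abs_sub (f (t + σ)) (f (t + τ)), hC (t + σ), hC (t + τ)]
  rw [intervalIntegral.integral_const, smul_eq_mul, add_sub_cancel_left] at hint
  calc windowMean f l ξ σ τ ≤ (1 / l) * (l * (2 * C)) := by
        unfold windowMean; gcongr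
    _ = 2 * C := by field_simp

end IsBddMeasurable

section WeylDist

variable {f : ℝ → ℝ} {l : ℝ}

theorem windowMean_nonneg (hl : 0 ≤ l) (ξ σ τ : ℝ) : 0 ≤ windowMean f l ξ σ τ :=
  mul_nonneg (by positivity)
    (intervalIntegral.integral_nonneg (by linarith) fun _ _ => abs_nonneg _)

theorem windowMean_comm (ξ σ τ : ℝ) : windowMean f l ξ σ τ = windowMean f l ξ τ σ := by
  simp only [windowMean, abs_sub_comm]

theorem windowMean_add_add (ξ σ τ c : ℝ) :
    windowMean f l ξ (σ + c) (τ + c) = windowMean f l (ξ + c) σ τ := by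
  rw [windowMean, windowMean, add_right_comm ξ c l,
    ← intervalIntegral.integral_comp_add_right (fun t => |f (t + σ) - f (t + τ)|) c]
  simp only [add_assoc, add_comm c]

theorem windowMean_triangle (hf : IsBddMeasurable f) (hl : 0 ≤ l) (ξ σ ρ τ : ℝ) :
    windowMean f l ξ σ τ ≤ windowMean f l ξ σ ρ + windowMean f l ξ ρ τ :=
  one_div_mul_integral_le_add hl (hf.intervalIntegrable _ _ _ _) (hf.intervalIntegrable _ _ _ _)
    (hf.intervalIntegrable _ _ _ _) fun _ => abs_sub_le _ _ _

theorem windowMean_le_weylDist (hf : IsBddMeasurable f) (hl : 0 < l) (ξ σ τ : ℝ) :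
    windowMean f l ξ σ τ ≤ weylDist f l σ τ :=
  le_ciSup (hf.bddAbove_windowMean hl σ τ) ξ

theorem weylDist_nonneg (hl : 0 ≤ l) (σ τ : ℝ) : 0 ≤ weylDist f l σ τ :=
  Real.iSup_nonneg fun ξ => windowMean_nonneg hl ξ σ τ

theorem weylDist_comm (σ τ : ℝ) : weylDist f l σ τ = weylDist f l τ σ := by
  simp only [weylDist, windowMean_comm _ σ]

theorem weylDist_add_add (σ τ c : ℝ) : weylDist f l (σ + c) (τ + c) = weylDist f l σ τ := by
  simp only [weylDist, windowMean_add_add]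
  exact (Equiv.addRight c).iSup_comp (g := fun ξ => windowMean f l ξ σ τ)

theorem weylDist_eq_weylDist_zero_sub (σ τ : ℝ) :
    weylDist f l σ τ = weylDist f l 0 (τ - σ) := by
  simpa using weylDist_add_add (f := f) (l := l) 0 (τ - σ) σ

theorem weylDist_triangle (hf : IsBddMeasurable f) (hl : 0 < l) (σ ρ τ : ℝ) :
    weylDist f l σ τ ≤ weylDist f l σ ρ + weylDist f l ρ τ :=
  ciSup_le fun ξ => (windowMean_triangle hf hl.le ξ σ ρ τ).trans
    (add_le_add (windowMean_le_weylDist hf hl ξ σ ρ) (windowMean_le_weylDist hf hl ξ ρ τ))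

theorem integral_le_mul_weylDist (hf : IsBddMeasurable f) (hl : 0 < l) (ξ σ τ : ℝ) :
    ∫ t in ξ..(ξ + l), |f (t + σ) - f (t + τ)| ≤ l * weylDist f l σ τ := by
  have h := windowMean_le_weylDist hf hl ξ σ τ
  rw [windowMean, one_div, inv_mul_le_iff₀ hl] at h
  exact h

theorem integral_le_nat_mul_weylDist (hf : IsBddMeasurable f) (hl : 0 < l) (ξ σ τ : ℝ)
    (n : ℕ) : ∫ t in ξ..(ξ + n * l), |f (t + σ) - f (t + τ)| ≤ n * (l * weylDist f l σ τ) := by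
  induction n with
  | zero => simp
  | succ n ih =>
    have hlast := integral_le_mul_weylDist hf hl (ξ + n * l) σ τ
    rw [← intervalIntegral.integral_add_adjacent_intervals (hf.intervalIntegrable σ τ _ _)
      (hf.intervalIntegrable σ τ _ _)]
    push_cast
    rw [add_one_mul, ← add_assoc]
    linarith

/-- A longer window can at most double the Weyl distance: cover it by `⌈L / l⌉ ≤ 2L / l`
windows of length `l`. -/
theorem weylDist_le_two_mul_of_le (hf : IsBddMeasurable f) (hl : 0 < l) {L : ℝ} (hlL : l ≤ L)
    (σ τ : ℝ) : weylDist f L σ τ ≤ 2 * weylDist f l σ τ := by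
  have hL : 0 < L := hl.trans_le hlL
  set n := ⌈L / l⌉₊
  have hLn : L ≤ n * l := (div_le_iff₀ hl).1 (Nat.le_ceil _)
  have hnl : n * l ≤ 2 * L := by
    have := (Nat.ceil_lt_add_one (div_nonneg hL.le hl.le)).le
    rw [← le_div_iff₀ hl]
    calc (n : ℝ) ≤ L / l + 1 := this
      _ ≤ 2 * L / l := by rw [mul_div_assoc, two_mul, add_le_add_iff_left, le_div_iff₀ hl]; linarith
  refine ciSup_le fun ξ => ?_
  have hint : ∫ t in ξ..(ξ + L), |f (t + σ) - f (t + τ)| ≤ n * l * weylDist f l σ τ := by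
    refine (intervalIntegral.integral_mono_interval le_rfl (by linarith : ξ ≤ ξ + L)
      (by linarith : ξ + L ≤ ξ + n * l) (Eventually.of_forall fun _ => abs_nonneg _)
      (hf.intervalIntegrable σ τ _ _)).trans ?_
    rw [mul_assoc]
    exact integral_le_nat_mul_weylDist hf hl ξ σ τ n
  calc windowMean f L ξ σ τ ≤ (1 / L) * (2 * L * weylDist f l σ τ) := by
        unfold windowMean
        gcongr
        exact hint.trans (mul_le_mul_of_nonneg_right hnl (weylDist_nonneg hl.le σ τ))
    _ = 2 * weylDist f l σ τ := by field_simp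

end WeylDist

/-- Each window `[ξ, ξ + l]` is moved into `[-a, l]` by an almost period `s ∈ [ξ, ξ + a]`,
at the cost of `p` at either end. -/
theorem weylDist_le_add_integral {f : ℝ → ℝ} {l a p : ℝ} (hf : IsBddMeasurable f) (hl : 0 < l)
    (hdense : ∀ ξ, ∃ s, ξ ≤ s ∧ s ≤ ξ + a ∧ weylDist f l 0 s ≤ p) (u v : ℝ) :
    weylDist f l u v ≤ 2 * p + (1 / l) * ∫ t in (-a)..l, |f (t + u) - f (t + v)| := by
  refine ciSup_le fun ξ => ?_
  obtain ⟨s, hξs, hsξ, hs⟩ := hdense ξ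
  have hmid : windowMean f l ξ (u - s) (v - s) = windowMean f l (ξ - s) u v := by
    simpa using (windowMean_add_add (f := f) (l := l) (ξ - s) (u - s) (v - s) s).symm
  have hwin : windowMean f l (ξ - s) u v ≤ (1 / l) * ∫ t in (-a)..l, |f (t + u) - f (t + v)| := by
    unfold windowMean
    gcongr
    exact intervalIntegral.integral_mono_interval (by linarith) (by linarith) (by linarith)
      (Eventually.of_forall fun _ => abs_nonneg _) (hf.intervalIntegrable u v _ _)
  calc windowMean f l ξ u v
      ≤ windowMean f l ξ u (u - s) + windowMean f l ξ (u - s) (v - s)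
          + windowMean f l ξ (v - s) v := by
        linarith [windowMean_triangle hf hl.le ξ u (u - s) v,
          windowMean_triangle hf hl.le ξ (u - s) (v - s) v]
    _ ≤ p + (1 / l) * (∫ t in (-a)..l, |f (t + u) - f (t + v)|) + p := by
        gcongr
        · refine (windowMean_le_weylDist hf hl ξ _ _).trans ?_
          rw [weylDist_comm, weylDist_eq_weylDist_zero_sub, sub_sub_cancel]
          exact hs
        · exact hmid ▸ hwin
        · refine (windowMean_le_weylDist hf hl ξ _ _).trans ?_
          rw [weylDist_eq_weylDist_zero_sub, sub_sub_cancel]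
          exact hs
    _ = _ := by ring

theorem MeasureTheory.Integrable.tendsto_integral_abs_sub_comp_add {F : ℝ → ℝ}
    (hF : Integrable F) (w : ℝ) :
    Tendsto (fun u => ∫ t, |F (t + u) - F (t + w)|) (𝓝 w) (𝓝 0) := by
  have hcont : Continuous fun u : ℝ => ContinuousMap.addRight u :=
    ContinuousMap.continuous_of_continuous_uncurry _ (continuous_snd.add continuous_fst)
  have hφ := continuous_const.compMeasurePreservingLp hcont
    (fun u => measurePreserving_add_right volume u) ENNReal.one_ne_top (f := fun _ => hF.toL1 F)
  have hcoe : ∀ u, Lp.compMeasurePreserving (ContinuousMap.addRight u)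
      (measurePreserving_add_right volume u) (hF.toL1 F) =ᵐ[volume] fun t => F (t + u) := fun u =>
    (Lp.coeFn_compMeasurePreserving _ _).trans
      ((measurePreserving_add_right volume u).quasiMeasurePreserving.ae_eq_comp hF.coeFn_toL1)
  have hdist := tendsto_iff_dist_tendsto_zero.1 (hφ.tendsto w)
  refine hdist.congr fun u => ?_
  rw [L1.dist_eq_integral_dist]
  refine integral_congr_ae ?_
  filter_upwards [hcoe u, hcoe w] with t h₁ h₂
  rw [h₁, h₂, Real.dist_eq]

/-- Continuity of translation in `L¹` and compactness of `[0, A]`. -/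
theorem IsBddMeasurable.exists_finset_integral_abs_sub_lt {f : ℝ → ℝ} (hf : IsBddMeasurable f)
    {a b : ℝ} (hab : a ≤ b) (A : ℝ) {η : ℝ} (hη : 0 < η) :
    ∃ N : Finset ℝ, ∀ u ∈ Icc 0 A, ∃ w ∈ N, ∫ t in a..b, |f (t + u) - f (t + w)| < η := by
  obtain ⟨C, hC⟩ := hf.bdd
  set F := (Icc a (b + A)).indicator f
  have hF : Integrable F := (integrable_indicator_iff measurableSet_Icc).2 <|
    Measure.integrableOn_of_bounded measure_Icc_lt_top.ne hf.measurable.aestronglyMeasurable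
      (M := C) (Eventually.of_forall hC)
  obtain ⟨N, hN, hcover⟩ := isCompact_Icc.elim_nhds_subcover
    (fun w => {u | ∫ t, |F (t + u) - F (t + w)| < η})
    (fun w _ => hF.tendsto_integral_abs_sub_comp_add w (Iio_mem_nhds hη))
  refine ⟨N, fun u hu => ?_⟩
  obtain ⟨w, hw, hwu⟩ := mem_iUnion₂.1 (hcover hu)
  refine ⟨w, hw, lt_of_le_of_lt ?_ hwu⟩
  have hFf : ∀ t ∈ Icc a b, ∀ v ∈ Icc 0 A, F (t + v) = f (t + v) := fun t ht v hv =>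
    indicator_of_mem (show t + v ∈ Icc a (b + A) from
      ⟨by linarith [ht.1, hv.1], by linarith [ht.2, hv.2]⟩) f
  rw [intervalIntegral.integral_of_le hab, ← integral_Icc_eq_integral_Ioc]
  calc ∫ t in Icc a b, |f (t + u) - f (t + w)|
      = ∫ t in Icc a b, |F (t + u) - F (t + w)| :=
        setIntegral_congr_fun measurableSet_Icc fun t ht => by
          simp only [hFf t ht u hu, hFf t ht w (hN w hw)]
    _ ≤ ∫ t, |F (t + u) - F (t + w)| :=
        setIntegral_le_integral ((hF.comp_add_right u).sub (hF.comp_add_right w)).abs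
          (Eventually.of_forall fun _ => abs_nonneg _)

/-- Write `τ = s + u` with `s` an almost period and `u ∈ [0, a]`, and cover `[0, a]` in
`L¹[-a, l]`. -/
theorem W1APr.exists_finset_weylDist_lt {f : ℝ → ℝ} (hf : IsBddMeasurable f) (hW : W1APr f)
    {ε : ℝ} (hε : 0 < ε) :
    ∃ l₀ > 0, ∀ l ≥ l₀, ∃ N : Finset ℝ, ∀ τ, ∃ w ∈ N, weylDist f l w τ < ε := by
  obtain ⟨l₀, hl₀, a, ha, hdense⟩ := w1APr_iff.1 hW (ε / 8) (by positivity)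
  refine ⟨l₀, hl₀, fun l hl => ?_⟩
  have hlpos : 0 < l := hl₀.trans_le hl
  have hdense' : ∀ ξ, ∃ s, ξ ≤ s ∧ s ≤ ξ + a ∧ weylDist f l 0 s ≤ ε / 4 := fun ξ => by
    obtain ⟨s, hs, hξs, hsξ⟩ := hdense ξ
    exact ⟨s, hξs, hsξ, by linarith [weylDist_le_two_mul_of_le hf hl₀ hl 0 s, hs.out]⟩
  obtain ⟨N, hN⟩ := hf.exists_finset_integral_abs_sub_lt (a := -a) (b := l) (by linarith) a
    (η := ε / 8 * l) (by positivity)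
  refine ⟨N, fun τ => ?_⟩
  obtain ⟨s, hτs, hsτ, hs⟩ := hdense' (τ - a)
  obtain ⟨w, hw, hint⟩ := hN (τ - s) ⟨by linarith, by linarith⟩
  have hτ : weylDist f l (τ - s) τ ≤ ε / 4 := by
    rwa [weylDist_eq_weylDist_zero_sub, sub_sub_cancel]
  have hwτ := weylDist_le_add_integral hf hlpos hdense' (τ - s) w
  have hmean : (1 / l) * ∫ t in (-a)..l, |f (t + (τ - s)) - f (t + w)| < ε / 8 := by
    calc _ < (1 / l) * (ε / 8 * l) := by gcongr
      _ = ε / 8 := by field_simp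
  refine ⟨w, hw, ?_⟩
  calc weylDist f l w τ ≤ weylDist f l (τ - s) w + weylDist f l (τ - s) τ := by
        rw [weylDist_comm (τ - s) w]; exact weylDist_triangle hf hlpos w (τ - s) τ
    _ < ε := by linarith

/-- Pick a representative `r` of each of the finitely many cells `(w₁ τ, w₂ τ)` of the two
finite covers; `x - r` is then a common almost period whenever `x` lies in the cell of `r`. -/
theorem W1APr.exists_relDense_weylDist_lt_and {f g : ℝ → ℝ} (hf : IsBddMeasurable f)
    (hg : IsBddMeasurable g) (hWf : W1APr f) (hWg : W1APr g) {ε : ℝ} (hε : 0 < ε) :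
    ∃ l > 0, RelDense {τ | weylDist f l 0 τ < ε ∧ weylDist g l 0 τ < ε} := by
  obtain ⟨l₁, hl₁, hnet₁⟩ := hWf.exists_finset_weylDist_lt hf (half_pos hε)
  obtain ⟨l₂, hl₂, hnet₂⟩ := hWg.exists_finset_weylDist_lt hg (half_pos hε)
  have hl : 0 < max l₁ l₂ := hl₁.trans_le (le_max_left _ _)
  obtain ⟨N₁, hN₁⟩ := hnet₁ (max l₁ l₂) (le_max_left _ _)
  obtain ⟨N₂, hN₂⟩ := hnet₂ (max l₁ l₂) (le_max_right _ _)
  choose w₁ hw₁ hd₁ using hN₁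
  choose w₂ hw₂ hd₂ using hN₂
  obtain ⟨R, hR⟩ := exists_finset_forall_exists_eq_of_finite_range (c := fun τ => (w₁ τ, w₂ τ))
    ((N₁ ×ˢ N₂).finite_toSet.subset (range_subset_iff.2 fun τ =>
      Finset.mem_coe.2 (Finset.mem_product.2 ⟨hw₁ τ, hw₂ τ⟩)))
  refine ⟨_, hl, relDense_of_forall_exists_sub_mem R fun x => ?_⟩
  obtain ⟨r, hr, hrx⟩ := hR x
  simp only [Prod.mk.injEq] at hrx
  have hsame : ∀ {h : ℝ → ℝ} (w : ℝ → ℝ), IsBddMeasurable h →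
      (∀ τ, weylDist h (max l₁ l₂) (w τ) τ < ε / 2) → w r = w x →
      weylDist h (max l₁ l₂) 0 (x - r) < ε := fun w hh hd hw => by
    rw [← weylDist_eq_weylDist_zero_sub]
    have := weylDist_triangle hh hl r (w x) x
    have hr := hd r
    rw [hw, weylDist_comm] at hr
    linarith [hd x]
  exact ⟨r, hr, hsame w₁ hf hd₁ hrx.1, hsame w₂ hg hd₂ hrx.2⟩

theorem weylDist_le_add_of_abs_sub_le {f g k : ℝ → ℝ} {l : ℝ} (hf : IsBddMeasurable f)
    (hg : IsBddMeasurable g) (hk : IsBddMeasurable k) (hl : 0 < l)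
    (h : ∀ x y, |k x - k y| ≤ |f x - f y| + |g x - g y|) (σ τ : ℝ) :
    weylDist k l σ τ ≤ weylDist f l σ τ + weylDist g l σ τ :=
  ciSup_le fun ξ => (one_div_mul_integral_le_add hl.le (hk.intervalIntegrable σ τ _ _)
    (hf.intervalIntegrable σ τ _ _) (hg.intervalIntegrable σ τ _ _) fun _ => h _ _).trans
    (add_le_add (windowMean_le_weylDist hf hl ξ σ τ) (windowMean_le_weylDist hg hl ξ σ τ))

theorem W1APr.of_abs_sub_le {f g k : ℝ → ℝ} (hf : IsBddMeasurable f) (hg : IsBddMeasurable g)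
    (hk : IsBddMeasurable k) (hWf : W1APr f) (hWg : W1APr g)
    (h : ∀ x y, |k x - k y| ≤ |f x - f y| + |g x - g y|) : W1APr k := by
  refine w1APr_iff.2 fun ε hε => ?_
  obtain ⟨l, hl, hE⟩ := hWf.exists_relDense_weylDist_lt_and hf hg hWg (half_pos hε)
  exact ⟨l, hl, hE.mono fun τ hτ =>
    (weylDist_le_add_of_abs_sub_le hf hg hk hl h 0 τ).trans_lt (by linarith [hτ.1, hτ.2])⟩

theorem abs_indicator_one_sub_le {α : Type*} {S T₁ T₂ : Set α} {x y : α}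
    (hS : (x ∈ T₁ ↔ y ∈ T₁) → (x ∈ T₂ ↔ y ∈ T₂) → (x ∈ S ↔ y ∈ S)) :
    |S.indicator (fun _ => (1 : ℝ)) x - S.indicator (fun _ => 1) y|
      ≤ |T₁.indicator (fun _ => (1 : ℝ)) x - T₁.indicator (fun _ => 1) y|
        + |T₂.indicator (fun _ => (1 : ℝ)) x - T₂.indicator (fun _ => 1) y| := by
  classical
  have hind : ∀ T : Set α, |T.indicator (fun _ => (1 : ℝ)) x - T.indicator (fun _ => 1) y|
      = if (x ∈ T ↔ y ∈ T) then 0 else 1 := fun T => by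
    by_cases hx : x ∈ T <;> by_cases hy : y ∈ T <;> simp [hx, hy]
  simp only [hind]
  split_ifs <;> simp_all

theorem stmt19 (T₁ T₂ : Set ℝ)
    (h₁ : MeasurableSet T₁) (h₂ : MeasurableSet T₂)
    (hW₁ : W1APr (T₁.indicator fun _ => (1 : ℝ)))
    (hW₂ : W1APr (T₂.indicator fun _ => (1 : ℝ))) :
    W1APr ((T₁ ∪ T₂).indicator fun _ => (1 : ℝ)) ∧
      W1APr ((T₁ ∩ T₂).indicator fun _ => (1 : ℝ)) ∧
      W1APr ((T₁ \ T₂).indicator fun _ => (1 : ℝ)) := by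
  have hW : ∀ S : Set ℝ, MeasurableSet S →
      (∀ x y, (x ∈ T₁ ↔ y ∈ T₁) → (x ∈ T₂ ↔ y ∈ T₂) → (x ∈ S ↔ y ∈ S)) →
      W1APr (S.indicator fun _ => (1 : ℝ)) := fun S hS hdet =>
    hW₁.of_abs_sub_le (isBddMeasurable_indicator_one h₁) (isBddMeasurable_indicator_one h₂)
      (isBddMeasurable_indicator_one hS) hW₂ fun x y => abs_indicator_one_sub_le (hdet x y)
  exact ⟨hW _ (h₁.union h₂) fun _ _ hT₁ hT₂ => by simp [hT₁, hT₂],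
    hW _ (h₁.inter h₂) fun _ _ hT₁ hT₂ => by simp [hT₁, hT₂],
    hW _ (h₁.diff h₂) fun _ _ hT₁ hT₂ => by simp [hT₁, hT₂]⟩
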